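/- If A is a semisimple MV-algebra and D is a semisimple DMV-algebra such that A is an MV-subalgebra of D and D is generated by A as a DMV-algebra (D = ⟨A⟩_DMV), then D is isomorphic to the divisible hull A^d of A. -/

import Mathlib

/-- An MV-algebra: an abelian monoid `(A, ⊕, 0)` with an involution `*` satisfying
the Łukasiewicz axioms. -/
class MVAlgebra (A : Type) where
  oplus : A → A → A
  star : A → A
  zero : A
  oplus_assoc : ∀ x y z : A, oplus (oplus x y) z = oplus x (oplus y z)
  oplus_comm : ∀ x y : A, oplus x y = oplus y x
  oplus_zero : ∀ x : A, oplus x zero = x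
  star_star : ∀ x : A, star (star x) = x
  lukasiewicz : ∀ x y : A,
    oplus (star (oplus (star x) y)) y = oplus (star (oplus (star y) x)) x
  oplus_star_zero : ∀ x : A, oplus (star zero) x = star zero

namespace MVAlgebra

variable {A : Type} [MVAlgebra A]

/-- The top element `1 = 0*`. -/
def one : A := star zero

/-- The MV-product `x ⊙ y = (x* ⊕ y*)*`. -/
def odot (x y : A) : A := star (oplus (star x) (star y))

/-- `n`-fold ⊕-sum of an element. -/
def nmul : ℕ → A → A
  | 0, _ => zero
  | n + 1, x => oplus (nmul n x) x

/-- The lattice join `x ∨ y = (x ⊙ y*) ⊕ y`. -/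
def sup (x y : A) : A := oplus (odot x (star y)) y

/-- The lattice meet `x ∧ y = (x ⊕ y*) ⊙ y`. -/
def inf (x y : A) : A := odot (oplus x (star y)) y

/-- The MV-order: `x ≤ y` iff `x ⊙ y* = 0`. -/
def le (x y : A) : Prop := odot x (star y) = zero

end MVAlgebra

/-- The rational unit interval `[0,1] ∩ ℚ`. -/
def QI : Type := {q : ℚ // 0 ≤ q ∧ q ≤ 1}

namespace QI

/-- Truncated addition on `[0,1] ∩ ℚ`. -/
def oplus (r s : QI) : QI :=
  ⟨min (r.1 + s.1) 1, le_min (add_nonneg r.2.1 s.2.1) zero_le_one, min_le_right _ _⟩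

/-- Negation `r* = 1 - r` on `[0,1] ∩ ℚ`. -/
def star (r : QI) : QI :=
  ⟨1 - r.1, by constructor <;> [linarith [r.2.2]; linarith [r.2.1]]⟩

def zero : QI := ⟨0, le_refl 0, zero_le_one⟩

def one : QI := ⟨1, zero_le_one, le_refl 1⟩

/-- Ordinary multiplication of rationals, restricted to `[0,1] ∩ ℚ`. -/
def mul (r s : QI) : QI :=
  ⟨r.1 * s.1, mul_nonneg r.2.1 s.2.1, by nlinarith [r.2.1, r.2.2, s.2.1, s.2.2]⟩

/-- The MV-product `r ⊙ s = (r* ⊕ s*)*` on `[0,1] ∩ ℚ`. -/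
def odot (r s : QI) : QI := star (oplus (star r) (star s))

/-- Division by a natural number in `[0,1] ∩ ℚ`. -/
def div (r : QI) (n : ℕ) : QI :=
  ⟨r.1 / n, div_nonneg r.2.1 (Nat.cast_nonneg n), by
    rcases Nat.eq_zero_or_pos n with h | h
    · simp [h]
    · exact le_trans (div_le_self r.2.1 (by exact_mod_cast h)) r.2.2⟩

/-- `1/n` as an element of `[0,1] ∩ ℚ` (with `1/0 = 0`). -/
def oneOver (n : ℕ) : QI := div one n

/-- Join (maximum) in `[0,1] ∩ ℚ`. -/
def sup (r s : QI) : QI :=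
  ⟨max r.1 s.1, le_max_of_le_left r.2.1, max_le r.2.2 s.2.2⟩

/-- Meet (minimum) in `[0,1] ∩ ℚ`. -/
def inf (r s : QI) : QI :=
  ⟨min r.1 s.1, le_min r.2.1 s.2.1, min_le_of_left_le r.2.2⟩

end QI

/-- A DMV-algebra: an MV-algebra with division operators `δ_n` (`n ≥ 1`) satisfying
`n·δ_n x = x` and `δ_n x ⊙ (n-1)·δ_n x = 0`. -/
class DMVAlgebra (A : Type) extends MVAlgebra A where
  delta : ℕ → A → A
  delta_nmul : ∀ n : ℕ, 1 ≤ n → ∀ x : A, MVAlgebra.nmul n (delta n x) = x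
  delta_odot : ∀ n : ℕ, 1 ≤ n → ∀ x : A,
    MVAlgebra.odot (delta n x) (MVAlgebra.nmul (n - 1) (delta n x)) = MVAlgebra.zero

/-- Homomorphism of MV-algebras: preserves `⊕`, `*` and `0`. -/
def IsMVHom {A B : Type} [MVAlgebra A] [MVAlgebra B] (f : A → B) : Prop :=
  (∀ x y : A, f (MVAlgebra.oplus x y) = MVAlgebra.oplus (f x) (f y)) ∧
  (∀ x : A, f (MVAlgebra.star x) = MVAlgebra.star (f x)) ∧
  f MVAlgebra.zero = MVAlgebra.zero

/-- Homomorphism of DMV-algebras: an MV-homomorphism preserving every `δ_n`. -/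
def IsDMVHom {A B : Type} [DMVAlgebra A] [DMVAlgebra B] (f : A → B) : Prop :=
  IsMVHom f ∧ ∀ n : ℕ, 1 ≤ n → ∀ x : A, f (DMVAlgebra.delta n x) = DMVAlgebra.delta n (f x)

/-- Ideal of an MV-algebra: contains `0`, downward closed, closed under `⊕`. -/
def IsMVIdeal {A : Type} [MVAlgebra A] (I : Set A) : Prop :=
  MVAlgebra.zero ∈ I ∧ (∀ x ∈ I, ∀ y : A, MVAlgebra.le y x → y ∈ I) ∧
  ∀ x ∈ I, ∀ y ∈ I, MVAlgebra.oplus x y ∈ I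

/-- Maximal ideal: a proper ideal maximal under inclusion. -/
def IsMaximalMVIdeal {A : Type} [MVAlgebra A] (I : Set A) : Prop :=
  IsMVIdeal I ∧ I ≠ Set.univ ∧
  ∀ J : Set A, IsMVIdeal J → J ≠ Set.univ → I ⊆ J → J = I

/-- Semisimplicity: the intersection of all maximal ideals is `{0}`. -/
def IsSemisimple (A : Type) [MVAlgebra A] : Prop :=
  ∀ x : A, (∀ I : Set A, IsMaximalMVIdeal I → x ∈ I) → x = MVAlgebra.zero

/-- Bimorphism `[0,1]_ℚ × A → C`: preserves `∨`, `∧` and the partial sum `+`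
in each argument separately. -/
def IsQBimorphism {A C : Type} [MVAlgebra A] [MVAlgebra C] (β : QI → A → C) : Prop :=
  (∀ (r s : QI) (a : A), β (QI.sup r s) a = MVAlgebra.sup (β r a) (β s a)) ∧
  (∀ (r s : QI) (a : A), β (QI.inf r s) a = MVAlgebra.inf (β r a) (β s a)) ∧
  (∀ (r s : QI) (a : A), QI.odot r s = QI.zero →
    MVAlgebra.odot (β r a) (β s a) = MVAlgebra.zero ∧
      β (QI.oplus r s) a = MVAlgebra.oplus (β r a) (β s a)) ∧
  (∀ (r : QI) (a b : A), β r (MVAlgebra.sup a b) = MVAlgebra.sup (β r a) (β r b)) ∧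
  (∀ (r : QI) (a b : A), β r (MVAlgebra.inf a b) = MVAlgebra.inf (β r a) (β r b)) ∧
  (∀ (r : QI) (a b : A), MVAlgebra.odot a b = MVAlgebra.zero →
    MVAlgebra.odot (β r a) (β r b) = MVAlgebra.zero ∧
      β r (MVAlgebra.oplus a b) = MVAlgebra.oplus (β r a) (β r b))

/-- `T`, together with the bimorphism `β`, is the semisimple tensor product
`[0,1]_ℚ ⊗ A`: `T` is semisimple and `β` is universal among bimorphisms into
semisimple MV-algebras. -/
def IsQTensor (A T : Type) [MVAlgebra A] [MVAlgebra T] (β : QI → A → T) : Prop :=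
  IsSemisimple T ∧ IsQBimorphism β ∧
  ∀ (C : Type) [MVAlgebra C], IsSemisimple C → ∀ γ : QI → A → C, IsQBimorphism γ →
    ∃! h : T → C, IsMVHom h ∧ ∀ (r : QI) (a : A), h (β r a) = γ r a

/-- The DMV-structure of `T` is the canonical one of `[0,1]_ℚ ⊗ A`:
`δ_n (t ⊗ a) = (t/n) ⊗ a`. -/
def DeltaCompat {A T : Type} [MVAlgebra A] [DMVAlgebra T] (β : QI → A → T) : Prop :=
  ∀ n : ℕ, 1 ≤ n → ∀ (t : QI) (a : A),
    DMVAlgebra.delta n (β t a) = β (QI.div t n) a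

/-- A subset of a DMV-algebra closed under the DMV-operations. -/
def DMVClosed {D : Type} [DMVAlgebra D] (S : Set D) : Prop :=
  MVAlgebra.zero ∈ S ∧
  (∀ x ∈ S, ∀ y ∈ S, MVAlgebra.oplus x y ∈ S) ∧
  (∀ x ∈ S, MVAlgebra.star x ∈ S) ∧
  (∀ n : ℕ, 1 ≤ n → ∀ x ∈ S, DMVAlgebra.delta n x ∈ S)

/-- `S` generates `D` as a DMV-algebra: the only DMV-subalgebra of `D`
containing `S` is `D` itself. -/
def GeneratesDMV {D : Type} [DMVAlgebra D] (S : Set D) : Prop :=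
  ∀ T : Set D, DMVClosed T → S ⊆ T → ∀ x : D, x ∈ T

/-- `(E, ι)` is a divisible hull of the MV-algebra `A`: `ι` is an MV-embedding of `A`
into the DMV-algebra `E`, `E` is generated by `ι(A)` as a DMV-algebra, and every
MV-homomorphism from `A` into a DMV-algebra extends uniquely to a DMV-homomorphism
of `E`. -/
def IsDivisibleHull (A E : Type) [MVAlgebra A] [DMVAlgebra E] (ι : A → E) : Prop :=
  IsMVHom ι ∧ Function.Injective ι ∧ GeneratesDMV (Set.range ι) ∧
  ∀ (D' : Type) [DMVAlgebra D'] (f : A → D'), IsMVHom f →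
    ∃! g : E → D', IsDMVHom g ∧ ∀ a : A, g (ι a) = f a

/-!
The isomorphism is the DMV-homomorphism `g : E → D` extending `i` that the universal property of
`E` provides. Its range is a DMV-subalgebra containing `i(A)`, hence all of `D`. For injectivity it
suffices that every `x ∈ E` has a multiple `N • x = ι a` with `N > 0`: if `g x = 0`, then
`i a = g (N • x) = 0`, so `a = 0` and `x ≤ N • x = 0`.

Such multiples exist because the sums `δ_N a₁ ⊕ ⋯ ⊕ δ_N a_N` with `aᵢ ∈ ι(A)`, whose `N`-fold
multiple is `a₁ ⊕ ⋯ ⊕ a_N`, form a DMV-subalgebra of `E`, which must be all of `E`. These sums are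
not truncated, so `δ_m` and the complement act on them termwise; this rests on `δ_n x` being the
only `y` with `n • y = x` whose `n`-fold sum is not truncated. Two such sums are added over a
common denominator by carrying, using `δ_N a ⊕ δ_N c = δ_N (a ⊕ c) ⊕ δ_N (a ⊙ c)`; the overflow
left after the `N`-th term is disjoint from the complement of every term, so it is absorbed.
-/

namespace MVAlgebra

variable {A : Type} [MVAlgebra A]

scoped postfix:max "⋆" => MVAlgebra.star
scoped infixl:70 " ⊙ " => MVAlgebra.odot

instance : AddCommMonoid A where
  add := oplus
  zero := zero
  add_assoc := oplus_assoc
  zero_add x := (oplus_comm _ _).trans (oplus_zero x)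
  add_zero := oplus_zero
  add_comm := oplus_comm
  nsmul := nmul
  nsmul_zero _ := rfl
  nsmul_succ _ _ := rfl

theorem odot_def (x y : A) : x ⊙ y = (x⋆ + y⋆)⋆ := rfl

theorem star_add (x y : A) : (x + y)⋆ = x⋆ ⊙ y⋆ := by
  rw [odot_def, star_star, star_star]

theorem star_odot (x y : A) : (x ⊙ y)⋆ = x⋆ + y⋆ := star_star _

theorem odot_comm (x y : A) : x ⊙ y = y ⊙ x := by
  rw [odot_def, add_comm, ← odot_def]

theorem odot_assoc (x y z : A) : x ⊙ y ⊙ z = x ⊙ (y ⊙ z) := by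
  simp only [odot_def, star_star, add_assoc]

instance : Std.Associative (odot (A := A)) := ⟨odot_assoc⟩
instance : Std.Commutative (odot (A := A)) := ⟨odot_comm⟩

theorem star_zero_add (x : A) : 0⋆ + x = 0⋆ := oplus_star_zero x

theorem add_star_zero (x : A) : x + 0⋆ = 0⋆ := by
  rw [add_comm]; exact star_zero_add x

theorem zero_odot (x : A) : 0 ⊙ x = 0 := by
  rw [odot_def, star_zero_add, star_star]

theorem odot_zero (x : A) : x ⊙ 0 = 0 := by
  rw [odot_comm, zero_odot]

theorem odot_star_add_comm (x y : A) : x ⊙ y⋆ + y = y ⊙ x⋆ + x := by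
  rw [odot_def, odot_def, star_star, star_star]
  exact lukasiewicz x y

theorem star_zero_odot (x : A) : 0⋆ ⊙ x = x := by
  rw [odot_def, star_star, zero_add, star_star]

theorem star_add_self (x : A) : x⋆ + x = 0⋆ := by
  have h := odot_star_add_comm x 0⋆
  rwa [star_star, odot_zero, zero_add, star_zero_odot, eq_comm] at h

theorem odot_star_self (x : A) : x ⊙ x⋆ = 0 := by
  rw [odot_def, star_star, star_add_self, star_star]

instance : PartialOrder A where
  le := MVAlgebra.le
  le_refl := odot_star_self
  le_trans x y z (hxy : x ⊙ y⋆ = 0) (hyz : y ⊙ z⋆ = 0) := by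
    show x ⊙ z⋆ = 0
    calc x ⊙ z⋆ = x ⊙ (y ⊙ z⋆ + z)⋆ := by rw [hyz, zero_add]
    _ = x ⊙ (z ⊙ y⋆ + y)⋆ := by rw [odot_star_add_comm]
    _ = (x ⊙ y⋆) ⊙ (z ⊙ y⋆)⋆ := by rw [star_add]; ac_rfl
    _ = 0 := by rw [hxy, zero_odot]
  le_antisymm x y (hxy : x ⊙ y⋆ = 0) (hyx : y ⊙ x⋆ = 0) := by
    calc x = y ⊙ x⋆ + x := by rw [hyx, zero_add]
    _ = x ⊙ y⋆ + y := odot_star_add_comm y x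
    _ = y := by rw [hxy, zero_add]

theorem le_iff_odot_star {x y : A} : x ≤ y ↔ x ⊙ y⋆ = 0 := Iff.rfl

theorem odot_star_add_of_le {x y : A} (h : y ≤ x) : x ⊙ y⋆ + y = x := by
  rw [odot_star_add_comm, show y ⊙ x⋆ = 0 from h, zero_add]

theorem le_iff_star_add {x y : A} : x ≤ y ↔ x⋆ + y = 0⋆ := by
  rw [le_iff_odot_star, odot_def, star_star]
  exact ⟨fun h => by rw [← h, star_star], fun h => by rw [h, star_star]⟩

theorem odot_eq_zero_iff_le_star {x y : A} : x ⊙ y = 0 ↔ x ≤ y⋆ := by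
  rw [le_iff_odot_star, star_star]

theorem star_le_star {x y : A} (h : x ≤ y) : y⋆ ≤ x⋆ := by
  rwa [le_iff_odot_star, star_star, odot_comm]

theorem le_star_comm {x y : A} : x ≤ y⋆ ↔ y ≤ x⋆ := by
  rw [← odot_eq_zero_iff_le_star, ← odot_eq_zero_iff_le_star, odot_comm]

theorem star_le_star_iff {x y : A} : x⋆ ≤ y⋆ ↔ y ≤ x :=
  ⟨fun h => by simpa only [star_star] using star_le_star h, star_le_star⟩

instance : IsOrderedAddMonoid A where
  add_le_add_left a b h c := by
    rw [le_iff_star_add] at h ⊢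
    calc (a + c)⋆ + (b + c) = (a⋆ ⊙ c⋆ + c) + b := by rw [star_add]; ac_rfl
    _ = c ⊙ a + (a⋆ + b) := by rw [odot_star_add_comm, star_star, add_assoc]
    _ = 0⋆ := by rw [h, add_star_zero]

instance : CanonicallyOrderedAdd A where
  exists_add_of_le {a b} h := ⟨b ⊙ a⋆, by rw [add_comm, odot_star_add_of_le h]⟩
  le_self_add a b := by
    rw [le_iff_odot_star, star_add, ← odot_assoc, odot_star_self, zero_odot]
  le_add_self a b := by
    rw [le_iff_odot_star, star_add, odot_comm b⋆, ← odot_assoc, odot_star_self, zero_odot]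

theorem odot_le_odot_right {x y : A} (h : x ≤ y) (z : A) : x ⊙ z ≤ y ⊙ z :=
  star_le_star (add_le_add_left (star_le_star h) _)

theorem odot_le_odot_left {x y : A} (h : x ≤ y) (z : A) : z ⊙ x ≤ z ⊙ y := by
  rw [odot_comm z, odot_comm z]; exact odot_le_odot_right h z

theorem odot_le_odot {x y u v : A} (h₁ : x ≤ y) (h₂ : u ≤ v) : x ⊙ u ≤ y ⊙ v :=
  (odot_le_odot_right h₁ u).trans (odot_le_odot_left h₂ y)

theorem odot_le_left (x y : A) : x ⊙ y ≤ x := by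
  rw [le_iff_odot_star, odot_comm x, odot_assoc, odot_star_self, odot_zero]

theorem odot_le_right (x y : A) : x ⊙ y ≤ y := by
  rw [odot_comm]; exact odot_le_left y x

instance : SemilatticeSup A where
  sup := MVAlgebra.sup
  le_sup_left x y := by
    show x ≤ x ⊙ y⋆ + y
    rw [odot_star_add_comm]; exact le_add_self
  le_sup_right x y := le_add_self
  sup_le a b c hac hbc := by
    show a ⊙ b⋆ + b ≤ c
    calc a ⊙ b⋆ + b ≤ c ⊙ b⋆ + b := add_le_add_left (odot_le_odot_right hac _) _
    _ = c := odot_star_add_of_le hbc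

theorem sup_def (x y : A) : x ⊔ y = x ⊙ y⋆ + y := rfl

theorem inf_eq_star_sup (x y : A) : MVAlgebra.inf x y = (x⋆ ⊔ y⋆)⋆ := by
  show (x + y⋆) ⊙ y = (x⋆ ⊙ y⋆⋆ + y⋆)⋆
  rw [← star_add]; rfl

instance : Lattice A where
  inf := MVAlgebra.inf
  inf_le_left x y := by
    rw [inf_eq_star_sup, ← star_le_star_iff, star_star]; exact le_sup_left
  inf_le_right x y := by
    rw [inf_eq_star_sup, ← star_le_star_iff, star_star]; exact le_sup_right
  le_inf a b c hab hac := by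
    rw [inf_eq_star_sup, ← star_le_star_iff, star_star]
    exact sup_le (star_le_star hab) (star_le_star hac)

theorem inf_def (x y : A) : x ⊓ y = (x + y⋆) ⊙ y := rfl

instance : BoundedOrder A where
  top := 0⋆
  le_top x := by rw [le_iff_odot_star, star_star, odot_zero]
  bot := 0
  bot_le _ := zero_le

theorem add_star_self (x : A) : x + x⋆ = ⊤ := by
  rw [add_comm]; exact star_add_self x

theorem bot_eq_zero : (⊥ : A) = 0 := rfl

theorem top_odot (x : A) : ⊤ ⊙ x = x := star_zero_odot x

theorem star_add_add_self {b c : A} (h : b ⊙ c = 0) : (b + c)⋆ + b = c⋆ := by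
  rw [star_add, odot_comm, ← sup_def, sup_eq_left.mpr (odot_eq_zero_iff_le_star.mp h)]

theorem odot_add_eq_zero_and_iff {a b c : A} :
    a ⊙ (b + c) = 0 ∧ b ⊙ c = 0 ↔ a ⊙ b = 0 ∧ (a + b) ⊙ c = 0 := by
  simp only [odot_eq_zero_iff_le_star]
  constructor
  · rintro ⟨ha, hbc⟩
    refine ⟨ha.trans (star_le_star le_self_add), ?_⟩
    rw [← star_add_add_self (odot_eq_zero_iff_le_star.mpr hbc)]
    exact add_le_add_left ha b
  · rintro ⟨hab, habc⟩
    refine ⟨le_star_comm.mp ?_, le_add_self.trans habc⟩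
    rw [add_comm, ← star_add_add_self (odot_eq_zero_iff_le_star.mpr (le_star_comm.mp hab)),
      add_comm b a]
    exact add_le_add_left (le_star_comm.mp habc) b

theorem inf_star_eq (x y : A) : x ⊓ y⋆ = (x + y) ⊙ y⋆ := by
  rw [inf_def, star_star]

theorem eq_of_add_eq_add_right {a b c : A} (h : a + c = b + c) (ha : a ⊙ c = 0)
    (hb : b ⊙ c = 0) : a = b := by
  rw [odot_eq_zero_iff_le_star, ← inf_eq_left, inf_star_eq] at ha hb
  rw [← ha, ← hb, h]

theorem inf_add_odot_star (x y : A) : x ⊓ y + x ⊙ y⋆ = x := by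
  have h := odot_star_add_of_le (odot_le_left x y⋆)
  rwa [star_odot, star_star, odot_comm x, add_comm x⋆, ← inf_def, inf_comm] at h

theorem disjoint_iff_odot_star {x y : A} : Disjoint x y ↔ x ⊙ y⋆ = x := by
  rw [disjoint_iff, bot_eq_zero]
  constructor
  · intro h
    conv_rhs => rw [← inf_add_odot_star x y, h, zero_add]
  · intro h
    have hx : x ⊙ (x ⊓ y)⋆ = x := by
      refine (odot_le_left x _).antisymm ?_
      calc x = x ⊙ y⋆ := h.symm
      _ ≤ x ⊙ (x ⊓ y)⋆ := odot_le_odot_left (star_le_star inf_le_right) x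
    have horth : (x ⊓ y) ⊙ x = 0 := by
      refine le_antisymm ?_ zero_le
      calc (x ⊓ y) ⊙ x ≤ y ⊙ (x ⊙ y⋆) := by rw [h]; exact odot_le_odot_right inf_le_right x
      _ = 0 := by rw [odot_comm x, ← odot_assoc, odot_star_self, zero_odot]
    refine eq_of_add_eq_add_right ?_ horth (zero_odot x)
    calc x ⊓ y + x = x ⊙ (x ⊓ y)⋆ + x ⊓ y := by rw [hx, add_comm]
    _ = 0 + x := by rw [odot_star_add_of_le inf_le_left, zero_add]

theorem odot_star_inf (x y : A) : x ⊙ (x ⊓ y)⋆ = x ⊙ y⋆ := by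
  refine eq_of_add_eq_add_right (c := x ⊓ y) ?_ ?_ ?_
  · rw [odot_star_add_of_le inf_le_left, add_comm, inf_add_odot_star]
  · rw [odot_assoc, odot_comm _ (x ⊓ y), odot_star_self, odot_zero]
  · refine le_antisymm ?_ zero_le
    calc x ⊙ y⋆ ⊙ (x ⊓ y) ≤ x ⊙ y⋆ ⊙ y := odot_le_odot_left inf_le_right _
    _ = 0 := by rw [odot_assoc, odot_comm y⋆, odot_star_self, odot_zero]

theorem disjoint_odot_star (x y : A) : Disjoint (x ⊙ y⋆) (y ⊙ x⋆) := by
  have hle : y⋆ ≤ (x ⊓ y)⋆ := star_le_star inf_le_right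
  rw [disjoint_iff_odot_star]
  calc x ⊙ y⋆ ⊙ (y ⊙ x⋆)⋆ = x ⊙ (x ⊓ y)⋆ ⊙ (y ⊙ (x ⊓ y)⋆)⋆ := by
        rw [odot_star_inf, inf_comm, odot_star_inf]
  _ = x ⊙ ((y⋆ + x ⊓ y) ⊙ (x ⊓ y)⋆) := by rw [star_odot, star_star]; ac_rfl
  _ = x ⊙ y⋆ := by rw [← inf_star_eq, inf_eq_left.mpr hle]

theorem disjoint_add_right {x y z : A} (hy : Disjoint x y) (hz : Disjoint x z) :
    Disjoint x (y + z) := by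
  rw [disjoint_iff_odot_star] at *
  rw [star_add, ← odot_assoc, hy, hz]

theorem disjoint_list_sum_right {x : A} {l : List A} (h : ∀ b ∈ l, Disjoint x b) :
    Disjoint x l.sum := by
  induction l with
  | nil => exact disjoint_bot_right
  | cons b l ih =>
    exact disjoint_add_right (h b List.mem_cons_self)
      (ih fun c hc => h c (List.mem_cons_of_mem b hc))

theorem disjoint_nsmul_right {x y : A} (h : Disjoint x y) (n : ℕ) : Disjoint x (n • y) := by
  simpa using disjoint_list_sum_right (l := List.replicate n y) (by simpa using fun _ => h)

theorem eq_star_of_add_eq_top {u v : A} (hsum : u + v = ⊤) (horth : u ⊙ v = 0) : v = u⋆ := by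
  refine le_antisymm ?_ ?_
  · rwa [← odot_eq_zero_iff_le_star, odot_comm]
  · rw [← inf_eq_right, inf_star_eq, add_comm, hsum, top_odot]

theorem add_eq_left_of_disjoint_star {x y : A} (h : Disjoint x y⋆) : y + x = y := by
  refine le_antisymm ?_ le_self_add
  rw [le_iff_odot_star, add_comm, ← inf_star_eq, ← bot_eq_zero, ← disjoint_iff]
  exact h

theorem eq_zero_of_nsmul_eq_zero {n : ℕ} {x : A} (hn : 0 < n) (h : n • x = 0) : x = 0 :=
  le_antisymm (h ▸ le_self_nsmul zero_le hn.ne') zero_le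

/-- The `⊕`-sum of `l` involves no truncation: in `[0,1]` this says that the entries of `l`
add up to at most `1`. -/
def Orthogonal : List A → Prop
  | [] => True
  | a :: l => a ⊙ l.sum = 0 ∧ Orthogonal l

@[simp] theorem orthogonal_nil : Orthogonal ([] : List A) := trivial

@[simp] theorem orthogonal_cons {a : A} {l : List A} :
    Orthogonal (a :: l) ↔ a ⊙ l.sum = 0 ∧ Orthogonal l := Iff.rfl

theorem orthogonal_cons_cons {a b : A} {l : List A} :
    Orthogonal (a :: b :: l) ↔ a ⊙ b = 0 ∧ Orthogonal ((a + b) :: l) := by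
  simp only [orthogonal_cons, List.sum_cons, ← and_assoc, odot_add_eq_zero_and_iff]

theorem _root_.List.Perm.orthogonal_iff {l l' : List A} (h : l.Perm l') :
    Orthogonal l ↔ Orthogonal l' := by
  induction h with
  | nil => rfl
  | cons a _ ih => rw [orthogonal_cons, orthogonal_cons, ih, ‹List.Perm _ _›.sum_eq]
  | swap a b l => rw [orthogonal_cons_cons, orthogonal_cons_cons, odot_comm, add_comm]
  | trans _ _ ih₁ ih₂ => exact ih₁.trans ih₂

theorem orthogonal_append {l₁ l₂ : List A} :
    Orthogonal (l₁ ++ l₂) ↔ Orthogonal l₁ ∧ Orthogonal l₂ ∧ l₁.sum ⊙ l₂.sum = 0 := by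
  induction l₁ with
  | nil => simp [zero_odot]
  | cons a l₁ ih =>
    simp only [List.cons_append, orthogonal_cons, ih, List.sum_append, List.sum_cons]
    have := odot_add_eq_zero_and_iff (a := a) (b := l₁.sum) (c := l₂.sum)
    tauto

theorem orthogonal_replicate_succ {x : A} {k : ℕ} :
    Orthogonal (List.replicate (k + 1) x) ↔ x ⊙ k • x = 0 := by
  induction k with
  | zero => simp [odot_zero]
  | succ k ih =>
    rw [List.replicate_succ, orthogonal_cons, List.sum_replicate, ih, and_iff_left_iff_imp]
    intro h
    exact le_antisymm (h ▸ odot_le_odot_left (nsmul_le_nsmul_left zero_le k.le_succ) x) zero_le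

theorem Orthogonal.replicate_of_le {x : A} {m n : ℕ} (h : Orthogonal (List.replicate n x))
    (hmn : m ≤ n) : Orthogonal (List.replicate m x) := by
  rw [← Nat.add_sub_cancel' hmn, List.replicate_add, orthogonal_append] at h
  exact h.1

theorem Orthogonal.of_forall_le {l : List A} {h : A} {n : ℕ}
    (hh : Orthogonal (List.replicate n h)) (hl : ∀ p ∈ l, p ≤ h) (hn : l.length ≤ n) :
    Orthogonal l := by
  induction l with
  | nil => trivial
  | cons a l ih =>
    have hl' : ∀ p ∈ l, p ≤ h := fun p hp => hl p (List.mem_cons_of_mem a hp)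
    have hrep : Orthogonal (List.replicate (l.length + 1) h) :=
      hh.replicate_of_le (by simpa using hn)
    refine ⟨le_antisymm ?_ zero_le, ih hl' (by simp at hn; omega)⟩
    rw [← orthogonal_replicate_succ.mp hrep]
    exact odot_le_odot (hl a List.mem_cons_self) (List.sum_le_card_nsmul l h hl')

theorem orthogonal_map_fst_append_map_snd {l : List (A × A)} (h : ∀ p ∈ l, p.1 ⊙ p.2 = 0) :
    Orthogonal (l.map Prod.fst ++ l.map Prod.snd) ↔ Orthogonal (l.map fun p => p.1 + p.2) := by
  induction l with
  | nil => simp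
  | cons p l ih =>
    have hperm : (p.1 :: (l.map Prod.fst ++ p.2 :: l.map Prod.snd)).Perm
        (p.1 :: p.2 :: (l.map Prod.fst ++ l.map Prod.snd)) := List.perm_middle.cons _
    rw [List.map_cons, List.map_cons, List.cons_append, hperm.orthogonal_iff, orthogonal_cons_cons,
      and_iff_right (h p List.mem_cons_self), List.map_cons, orthogonal_cons, orthogonal_cons,
      ih fun q hq => h q (List.mem_cons_of_mem p hq), List.sum_append, ← List.sum_map_add]

theorem orthogonal_replicate_append_replicate {b c : A} {n : ℕ} (h : b ⊙ c = 0) :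
    Orthogonal (List.replicate n b ++ List.replicate n c) ↔
      Orthogonal (List.replicate n (b + c)) := by
  simpa using orthogonal_map_fst_append_map_snd (l := List.replicate n (b, c))
    fun p hp => by rw [List.eq_of_mem_replicate hp]; exact h

theorem nsmul_odot_nsmul_eq_zero {b c : A} {n : ℕ} (h : b ⊙ c = 0)
    (hbc : Orthogonal (List.replicate n (b + c))) : n • b ⊙ n • c = 0 := by
  simpa using (orthogonal_append.mp ((orthogonal_replicate_append_replicate h).mpr hbc)).2.2

theorem Orthogonal.replicate_nsmul {y : A} {m : ℕ} :
    ∀ {n : ℕ}, Orthogonal (List.replicate (n * m) y) → Orthogonal (List.replicate n (m • y))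
  | 0, _ => trivial
  | n + 1, h => by
    rw [Nat.succ_mul, List.replicate_add, orthogonal_append, List.sum_replicate,
      List.sum_replicate] at h
    rw [List.replicate_succ, orthogonal_cons, List.sum_replicate, ← mul_nsmul, mul_comm m n,
      odot_comm]
    exact ⟨h.2.2, Orthogonal.replicate_nsmul h.1⟩

theorem eq_of_nsmul_eq_of_orthogonal {n : ℕ} (hn : 0 < n) {a b : A}
    (ha : Orthogonal (List.replicate n a)) (hb : Orthogonal (List.replicate n b))
    (h : n • a = n • b) : a = b := by
  have hta : a ⊓ b + a ⊙ b⋆ = a := inf_add_odot_star a b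
  have hsb : a ⊓ b + b ⊙ a⋆ = b := by rw [inf_comm]; exact inf_add_odot_star b a
  have hmt : (a ⊓ b) ⊙ (a ⊙ b⋆) = 0 := by
    refine le_antisymm ?_ zero_le
    calc (a ⊓ b) ⊙ (a ⊙ b⋆) ≤ b ⊙ (a ⊙ b⋆) := odot_le_odot_right inf_le_right _
    _ = 0 := by rw [odot_comm a, ← odot_assoc, odot_star_self, zero_odot]
  have hms : (a ⊓ b) ⊙ (b ⊙ a⋆) = 0 := by
    refine le_antisymm ?_ zero_le
    calc (a ⊓ b) ⊙ (b ⊙ a⋆) ≤ a ⊙ (b ⊙ a⋆) := odot_le_odot_right inf_le_left _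
    _ = 0 := by rw [odot_comm b, ← odot_assoc, odot_star_self, zero_odot]
  have key : n • (a ⊙ b⋆) = n • (b ⊙ a⋆) := by
    refine eq_of_add_eq_add_right (c := n • (a ⊓ b)) ?_ ?_ ?_
    · rw [add_comm, ← nsmul_add, hta, add_comm, ← nsmul_add, hsb, h]
    · rw [odot_comm]; exact nsmul_odot_nsmul_eq_zero hmt (hta.symm ▸ ha)
    · rw [odot_comm]; exact nsmul_odot_nsmul_eq_zero hms (hsb.symm ▸ hb)
  have hdisj : Disjoint (n • (a ⊙ b⋆)) (n • (b ⊙ a⋆)) :=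
    disjoint_nsmul_right (disjoint_nsmul_right (disjoint_odot_star a b).symm n).symm n
  rw [key, disjoint_self, bot_eq_zero] at hdisj
  exact le_antisymm (eq_zero_of_nsmul_eq_zero hn (key ▸ hdisj)) (eq_zero_of_nsmul_eq_zero hn hdisj)

structure IsMVSubalgebra (S : Set A) : Prop where
  zero_mem : (0 : A) ∈ S
  add_mem {x y : A} : x ∈ S → y ∈ S → x + y ∈ S
  star_mem {x : A} : x ∈ S → x⋆ ∈ S

theorem IsMVSubalgebra.odot_mem {S : Set A} (hS : IsMVSubalgebra S) {x y : A} (hx : x ∈ S)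
    (hy : y ∈ S) : x ⊙ y ∈ S :=
  hS.star_mem (hS.add_mem (hS.star_mem hx) (hS.star_mem hy))

theorem IsMVSubalgebra.list_sum_mem {S : Set A} (hS : IsMVSubalgebra S) {l : List A}
    (hl : ∀ a ∈ l, a ∈ S) : l.sum ∈ S := by
  induction l with
  | nil => exact hS.zero_mem
  | cons a l ih =>
    exact hS.add_mem (hl a List.mem_cons_self) (ih fun b hb => hl b (List.mem_cons_of_mem a hb))

def carry : List A → A → List A
  | [], _ => []
  | a :: l, c => (a + c) :: carry l (c ⊙ a)

@[simp] theorem length_carry (l : List A) (c : A) : (carry l c).length = l.length := by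
  induction l generalizing c <;> simp [carry, *]

@[simp] theorem length_foldl_carry (l m : List A) : (m.foldl carry l).length = l.length := by
  induction m generalizing l <;> simp [*]

theorem foldl_odot_le (l : List A) (c : A) : l.foldl (· ⊙ ·) c ≤ c := by
  induction l generalizing c with
  | nil => exact le_rfl
  | cons a l ih => exact (ih _).trans (odot_le_left c a)

theorem disjoint_foldl_odot_star (l : List A) (c : A) :
    ∀ b ∈ carry l c, Disjoint (l.foldl (· ⊙ ·) c) b⋆ := by
  induction l generalizing c with
  | nil => simp [carry]
  | cons a l ih =>
    simp only [carry, List.mem_cons, forall_eq_or_imp, List.foldl_cons]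
    refine ⟨Disjoint.mono_left (foldl_odot_le l _) ?_, ih _⟩
    simpa only [star_add, star_star, odot_comm c a, odot_comm a⋆] using disjoint_odot_star a c⋆

theorem IsMVSubalgebra.carry_mem {S : Set A} (hS : IsMVSubalgebra S) {l : List A} {c : A}
    (hl : ∀ a ∈ l, a ∈ S) (hc : c ∈ S) : ∀ b ∈ carry l c, b ∈ S := by
  induction l generalizing c with
  | nil => simp [carry]
  | cons a l ih =>
    simp only [carry, List.mem_cons, forall_eq_or_imp] at hl ⊢
    exact ⟨hS.add_mem hl.1 hc, ih hl.2 (hS.odot_mem hc hl.1)⟩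

theorem IsMVSubalgebra.foldl_carry_mem {S : Set A} (hS : IsMVSubalgebra S) {l m : List A}
    (hl : ∀ a ∈ l, a ∈ S) (hm : ∀ c ∈ m, c ∈ S) : ∀ b ∈ m.foldl carry l, b ∈ S := by
  induction m generalizing l with
  | nil => exact hl
  | cons c m ih =>
    simp only [List.mem_cons, forall_eq_or_imp] at hm
    exact ih (hS.carry_mem hl hm.1) hm.2

end MVAlgebra

namespace DMVAlgebra

open MVAlgebra

variable {D : Type} [DMVAlgebra D]

theorem nsmul_delta {n : ℕ} (hn : 0 < n) (x : D) : n • delta n x = x := delta_nmul n hn x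

theorem orthogonal_replicate_delta {n : ℕ} (hn : 0 < n) (x : D) :
    Orthogonal (List.replicate n (delta n x)) := by
  obtain ⟨k, rfl⟩ : ∃ k, n = k + 1 := ⟨n - 1, by omega⟩
  exact orthogonal_replicate_succ.mpr (delta_odot (k + 1) hn x)

theorem delta_le {n : ℕ} (hn : 0 < n) (x : D) : delta n x ≤ x := by
  conv_rhs => rw [← nsmul_delta hn x]
  exact le_self_nsmul zero_le hn.ne'

theorem delta_nsmul {n : ℕ} (hn : 0 < n) {y : D} (hy : Orthogonal (List.replicate n y)) :
    delta n (n • y) = y :=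
  eq_of_nsmul_eq_of_orthogonal hn (orthogonal_replicate_delta hn _) hy (nsmul_delta hn _)

theorem delta_zero {n : ℕ} (hn : 0 < n) : delta n (0 : D) = 0 :=
  eq_zero_of_nsmul_eq_zero hn (nsmul_delta hn 0)

theorem delta_one (x : D) : delta 1 x = x := by
  simpa using nsmul_delta one_pos x

theorem delta_add {n : ℕ} (hn : 0 < n) {u v : D} (h : u ⊙ v = 0) :
    delta n (u + v) = delta n u + delta n v := by
  have hδ : delta n u ⊙ delta n v = 0 :=
    le_antisymm (h ▸ odot_le_odot (delta_le hn u) (delta_le hn v)) zero_le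
  have horth : Orthogonal (List.replicate n (delta n u + delta n v)) := by
    rw [← orthogonal_replicate_append_replicate hδ, orthogonal_append, List.sum_replicate,
      List.sum_replicate, nsmul_delta hn, nsmul_delta hn]
    exact ⟨orthogonal_replicate_delta hn u, orthogonal_replicate_delta hn v, h⟩
  rw [← delta_nsmul hn horth, nsmul_add, nsmul_delta hn, nsmul_delta hn]

theorem delta_mono {n : ℕ} (hn : 0 < n) {u v : D} (h : u ≤ v) : delta n u ≤ delta n v := by
  have horth : u ⊙ (v ⊙ u⋆) = 0 := by rw [odot_comm v, ← odot_assoc, odot_star_self, zero_odot]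
  rw [← odot_star_add_of_le h, add_comm, delta_add hn horth]
  exact le_self_add

theorem delta_delta {m n : ℕ} (hm : 0 < m) (hn : 0 < n) (x : D) :
    delta m (delta n x) = delta (n * m) x := by
  have hy := orthogonal_replicate_delta (Nat.mul_pos hn hm) x
  have hδn : delta n x = m • delta (n * m) x := by
    conv_lhs => rw [← nsmul_delta (Nat.mul_pos hn hm) x, mul_nsmul']
    exact delta_nsmul hn hy.replicate_nsmul
  rw [hδn, delta_nsmul hm (hy.replicate_of_le (Nat.le_mul_of_pos_left m hn))]

theorem delta_list_sum {n : ℕ} (hn : 0 < n) {l : List D} (hl : Orthogonal l) :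
    delta n l.sum = (l.map (delta n)).sum := by
  induction l with
  | nil => exact delta_zero hn
  | cons a l ih => rw [List.sum_cons, delta_add hn hl.1, ih hl.2, List.map_cons, List.sum_cons]

theorem delta_add_delta {n : ℕ} (hn : 0 < n) (a c : D) :
    delta n a + delta n c = delta n (a + c) + delta n (a ⊙ c) := by
  have ha : a ⊓ c⋆ + a ⊙ c = a := by simpa only [MVAlgebra.star_star] using inf_add_odot_star a c⋆
  have hac : a ⊓ c⋆ + c = a + c := by rw [inf_star_eq, odot_star_add_of_le le_add_self]
  have horth : (a ⊓ c⋆) ⊙ (a ⊙ c) = 0 := by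
    refine le_antisymm ?_ zero_le
    calc (a ⊓ c⋆) ⊙ (a ⊙ c) ≤ c⋆ ⊙ c := odot_le_odot inf_le_right (odot_le_right a c)
    _ = 0 := by rw [odot_comm, odot_star_self]
  calc delta n a + delta n c = delta n (a ⊓ c⋆) + delta n c + delta n (a ⊙ c) := by
        conv_lhs => rw [← ha, delta_add hn horth]
        exact add_right_comm _ _ _
  _ = delta n (a + c) + delta n (a ⊙ c) := by
        rw [← delta_add hn (odot_eq_zero_iff_le_star.mpr inf_le_right), hac]

def deltaSum (N : ℕ) (l : List D) : D := (l.map (delta N)).sum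

theorem deltaSum_cons (N : ℕ) (a : D) (l : List D) :
    deltaSum N (a :: l) = delta N a + deltaSum N l := rfl

theorem nsmul_deltaSum {N : ℕ} (hN : 0 < N) (l : List D) : N • deltaSum N l = l.sum := by
  induction l with
  | nil => exact nsmul_zero N
  | cons a l ih => rw [deltaSum_cons, nsmul_add, nsmul_delta hN, ih, List.sum_cons]

theorem orthogonal_map_delta {N : ℕ} (hN : 0 < N) {l : List D} (hl : l.length ≤ N) :
    Orthogonal (l.map (delta N)) :=
  (orthogonal_replicate_delta hN ⊤).of_forall_le
    (by simpa using fun a _ => delta_mono hN le_top) (by simpa using hl)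

theorem delta_deltaSum {N m : ℕ} (hN : 0 < N) (hm : 0 < m) {l : List D} (hl : l.length ≤ N) :
    delta m (deltaSum N l) = deltaSum (N * m) l := by
  rw [deltaSum, delta_list_sum hm (orthogonal_map_delta hN hl), List.map_map, deltaSum]
  exact congrArg List.sum (List.map_congr_left fun a _ => delta_delta hm hN a)

theorem deltaSum_append_replicate_zero {N : ℕ} (hN : 0 < N) (l : List D) (k : ℕ) :
    deltaSum N (l ++ List.replicate k 0) = deltaSum N l := by
  simp [deltaSum, delta_zero hN]

theorem deltaSum_flatMap_replicate {N m : ℕ} (hN : 0 < N) (hm : 0 < m) (l : List D) :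
    deltaSum (N * m) (l.flatMap (List.replicate m)) = deltaSum N l := by
  induction l with
  | nil => rfl
  | cons a l ih =>
    simp only [deltaSum] at ih ⊢
    rw [List.flatMap_cons, List.map_append, List.sum_append, ih, List.map_replicate,
      List.sum_replicate, ← delta_delta hm hN, nsmul_delta hm, List.map_cons, List.sum_cons]

theorem star_deltaSum {N : ℕ} (hN : 0 < N) {l : List D} (hl : l.length = N) :
    (deltaSum N l)⋆ = deltaSum N (l.map (·⋆)) := by
  have hpair : l.map (fun a => delta N a + delta N a⋆) = List.replicate N (delta N ⊤) := by
    simp [← delta_add hN (odot_star_self _), add_star_self, hl]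
  have horth : ∀ a : D, delta N a ⊙ delta N a⋆ = 0 := fun a =>
    le_antisymm ((odot_star_self a) ▸ odot_le_odot (delta_le hN a) (delta_le hN a⋆)) zero_le
  refine (eq_star_of_add_eq_top ?_ ?_).symm
  · rw [deltaSum, deltaSum, List.map_map, ← List.sum_map_add]
    simp only [Function.comp_def, hpair, List.sum_replicate, nsmul_delta hN]
  · have h := (orthogonal_map_fst_append_map_snd
      (l := l.map fun a => (delta N a, delta N a⋆)) (by simpa using fun a _ => horth a)).mpr
      (by rw [List.map_map]; exact hpair ▸ orthogonal_replicate_delta hN ⊤)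
    simpa [deltaSum, Function.comp_def] using (orthogonal_append.mp h).2.2

theorem deltaSum_add_delta_eq {N : ℕ} (hN : 0 < N) (l : List D) (c : D) :
    deltaSum N l + delta N c = deltaSum N (carry l c) + delta N (l.foldl (· ⊙ ·) c) := by
  induction l generalizing c with
  | nil => rfl
  | cons a l ih =>
    rw [carry, List.foldl_cons, deltaSum_cons, deltaSum_cons]
    calc delta N a + deltaSum N l + delta N c
        = delta N (a + c) + (deltaSum N l + delta N (c ⊙ a)) := by
          rw [add_right_comm, delta_add_delta hN, odot_comm a c, add_assoc,
            add_comm (delta N (c ⊙ a))]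
      _ = _ := by rw [ih, add_assoc]

theorem deltaSum_add_delta_eq_self {N : ℕ} (hN : 0 < N) {l : List D} (hl : l.length = N)
    {w : D} (hw : ∀ b ∈ l, Disjoint w b⋆) : deltaSum N l + delta N w = deltaSum N l := by
  refine add_eq_left_of_disjoint_star ?_
  rw [star_deltaSum hN hl, deltaSum]
  refine disjoint_list_sum_right ?_
  simpa using fun b hb => (hw b hb).mono (delta_le hN w) (delta_le hN b⋆)

theorem deltaSum_add_delta {N : ℕ} (hN : 0 < N) {l : List D} (hl : l.length = N) (c : D) :
    deltaSum N l + delta N c = deltaSum N (carry l c) := by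
  rw [deltaSum_add_delta_eq hN,
    deltaSum_add_delta_eq_self hN (by rw [length_carry, hl]) (disjoint_foldl_odot_star l c)]

theorem deltaSum_add_deltaSum {N : ℕ} (hN : 0 < N) {l : List D} (hl : l.length = N)
    (m : List D) : deltaSum N l + deltaSum N m = deltaSum N (m.foldl carry l) := by
  induction m generalizing l with
  | nil => exact add_zero _
  | cons c m ih =>
    rw [List.foldl_cons, ← ih (by rw [length_carry, hl]), ← deltaSum_add_delta hN hl,
      deltaSum_cons, add_assoc]

/-- The elements `a₁/N + ⋯ + a_N/N` with all `aᵢ ∈ S`; for `S` the image of `A` this is the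
divisible hull `A^d`. -/
def deltaSums (S : Set D) : Set D :=
  {x | ∃ N l, 0 < N ∧ l.length = N ∧ (∀ a ∈ l, a ∈ S) ∧ deltaSum N l = x}

theorem subset_deltaSums (S : Set D) : S ⊆ deltaSums S :=
  fun a ha => ⟨1, [a], one_pos, rfl, by simpa using ha, by simp [deltaSum, delta_one]⟩

theorem dmvClosed_deltaSums {S : Set D} (hS : IsMVSubalgebra S) : DMVClosed (deltaSums S) := by
  refine ⟨subset_deltaSums S hS.zero_mem, ?_, ?_, ?_⟩
  · rintro _ ⟨N, l, hN, hl, hlS, rfl⟩ _ ⟨M, m, hM, hm, hmS, rfl⟩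
    have hl' : (l.flatMap (List.replicate M)).length = N * M := by simp [hl]
    refine ⟨N * M, (m.flatMap (List.replicate N)).foldl carry (l.flatMap (List.replicate M)),
      Nat.mul_pos hN hM, ?_, ?_, ?_⟩
    · simp [hl']
    · exact hS.foldl_carry_mem (by simpa using fun a ha _ => hlS a ha)
        (by simpa using fun c hc _ => hmS c hc)
    · show _ = deltaSum N l + deltaSum M m
      rw [← deltaSum_flatMap_replicate hN hM l, ← deltaSum_flatMap_replicate hM hN m,
        mul_comm M N, deltaSum_add_deltaSum (Nat.mul_pos hN hM) hl']
  · rintro _ ⟨N, l, hN, hl, hlS, rfl⟩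
    exact ⟨N, l.map (·⋆), hN, by simp [hl], by simpa using fun a ha => hS.star_mem (hlS a ha),
      (star_deltaSum hN hl).symm⟩
  · rintro n hn _ ⟨N, l, hN, hl, hlS, rfl⟩
    refine ⟨N * n, l ++ List.replicate (N * n - N) 0, Nat.mul_pos hN hn, ?_, ?_, ?_⟩
    · have := Nat.le_mul_of_pos_right N hn
      simp only [List.length_append, List.length_replicate, hl]
      omega
    · simpa [or_imp, forall_and] using ⟨hlS, fun _ => hS.zero_mem⟩
    · rw [deltaSum_append_replicate_zero (Nat.mul_pos hN hn), delta_deltaSum hN hn hl.le]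

theorem exists_nsmul_mem_of_mem_deltaSums {S : Set D} (hS : IsMVSubalgebra S) {x : D}
    (hx : x ∈ deltaSums S) : ∃ N, 0 < N ∧ N • x ∈ S := by
  obtain ⟨N, l, hN, -, hlS, rfl⟩ := hx
  exact ⟨N, hN, nsmul_deltaSum hN l ▸ hS.list_sum_mem hlS⟩

end DMVAlgebra

open MVAlgebra DMVAlgebra

theorem GeneratesDMV.exists_nsmul_mem {D : Type} [DMVAlgebra D] {S : Set D}
    (hgen : GeneratesDMV S) (hS : IsMVSubalgebra S) (x : D) : ∃ N, 0 < N ∧ N • x ∈ S :=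
  exists_nsmul_mem_of_mem_deltaSums hS (hgen _ (dmvClosed_deltaSums hS) (subset_deltaSums S) x)

namespace IsMVHom

variable {A B : Type} [MVAlgebra A] [MVAlgebra B] {f : A → B}

theorem map_zero (hf : IsMVHom f) : f 0 = 0 := hf.2.2

theorem map_add (hf : IsMVHom f) (x y : A) : f (x + y) = f x + f y := hf.1 x y

theorem map_star (hf : IsMVHom f) (x : A) : f x⋆ = (f x)⋆ := hf.2.1 x

theorem map_odot (hf : IsMVHom f) (x y : A) : f (x ⊙ y) = f x ⊙ f y := by
  simp only [odot_def, hf.map_star, hf.map_add]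

theorem map_nsmul (hf : IsMVHom f) (n : ℕ) (x : A) : f (n • x) = n • f x := by
  induction n with
  | zero => simpa using hf.map_zero
  | succ n ih => rw [succ_nsmul, succ_nsmul, hf.map_add, ih]

theorem isMVSubalgebra_range (hf : IsMVHom f) : IsMVSubalgebra (Set.range f) where
  zero_mem := ⟨0, hf.map_zero⟩
  add_mem := by rintro _ _ ⟨x, rfl⟩ ⟨y, rfl⟩; exact ⟨x + y, hf.map_add x y⟩
  star_mem := by rintro _ ⟨x, rfl⟩; exact ⟨x⋆, hf.map_star x⟩

theorem injective_of_map_eq_zero (hf : IsMVHom f) (h : ∀ x, f x = 0 → x = 0) :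
    Function.Injective f := by
  intro x y hxy
  apply le_antisymm <;> apply h <;> rw [hf.map_odot, hf.map_star, hxy, odot_star_self]

end IsMVHom

theorem IsDMVHom.dmvClosed_range {D E : Type} [DMVAlgebra D] [DMVAlgebra E] {g : D → E}
    (hg : IsDMVHom g) : DMVClosed (Set.range g) := by
  refine ⟨⟨0, hg.1.map_zero⟩, ?_, ?_, ?_⟩
  · rintro _ ⟨x, rfl⟩ _ ⟨y, rfl⟩; exact ⟨x + y, hg.1.map_add x y⟩
  · rintro _ ⟨x, rfl⟩; exact ⟨x⋆, hg.1.map_star x⟩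
  · rintro n hn _ ⟨x, rfl⟩; exact ⟨delta n x, hg.2 n hn x⟩

theorem generated_dmv_is_divisible_hull_general (A D E : Type)
    [MVAlgebra A] [DMVAlgebra D] [DMVAlgebra E]
    (i : A → D) (hi : IsMVHom i) (hinj : Function.Injective i)
    (hgen : GeneratesDMV (Set.range i))
    (ι : A → E) (hE : IsDivisibleHull A E ι) :
    ∃ g : E → D, IsDMVHom g ∧ Function.Bijective g := by
  obtain ⟨hι, -, hgenE, huniv⟩ := hE
  obtain ⟨g, ⟨hg, hgι⟩, -⟩ := huniv D i hi
  refine ⟨g, hg, hg.1.injective_of_map_eq_zero fun x hx => ?_, fun d => ?_⟩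
  · obtain ⟨N, hN, a, ha⟩ := hgenE.exists_nsmul_mem hι.isMVSubalgebra_range x
    have hia : i a = i 0 := by rw [← hgι, ha, hg.1.map_nsmul, hx, nsmul_zero, hi.map_zero]
    rw [hinj hia, hι.map_zero] at ha
    exact eq_zero_of_nsmul_eq_zero hN ha.symm
  · exact hgen _ hg.dmvClosed_range (Set.range_subset_iff.2 fun a => ⟨ι a, hgι a⟩) d

/-- If `A` is a semisimple MV-algebra and `D` is a semisimple
DMV-algebra such that `A` is an MV-subalgebra of `D` (via the MV-embedding `i`) and
`D` is generated by `A` as a DMV-algebra, then `D` is isomorphic to the divisible hull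
`A^d` of `A`. -/
theorem generated_dmv_is_divisible_hull (A D E : Type)
    [MVAlgebra A] [DMVAlgebra D] [DMVAlgebra E]
    (hA : IsSemisimple A) (hD : IsSemisimple D)
    (i : A → D) (hi : IsMVHom i) (hinj : Function.Injective i)
    (hgen : GeneratesDMV (Set.range i))
    (ι : A → E) (hE : IsDivisibleHull A E ι) :
    ∃ g : E → D, IsDMVHom g ∧ Function.Bijective g :=
  generated_dmv_is_divisible_hull_general A D E i hi hinj hgen ι hE
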